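/- arXiv:1201.2545 — 3 statements merged into one kernel-verified Lean document; each statement's English description precedes it below -/
import Mathlib

section
/- Let N(t) = sup{n ≥ 0 : S_n ≤ t} be a general counting process with interarrival times X_1, X_2, … and arrival times S_n = X_1 + ⋯ + X_n (S_0 = 0), and let T be a nonnegative random time independent of the process (i.e., independent of the sequence (X_1, X_2, …)). Assume: (a) T is DFR; (b) P(T = 0)·P(X_1 = 0) = 0 (T and X_1 do not both have positive mass at 0). If E[F̄_T(X_1)]² ≤ E[F̄_T(S_2)] and E[F̄_T(S_{n+1})]² ≤ E[F̄_T(S_n)]·E[F̄_T(S_{n+2})] for all n = 1, 2, …, then N(T) is d-DFR. -/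
open MeasureTheory ProbabilityTheory

variable {Ω : Type*} [MeasurableSpace Ω]

/-- Survival function of a random variable `T`: `F̄_T(t) = P(T > t)`. -/
noncomputable def surv (μ : Measure Ω) (T : Ω → ℝ) (t : ℝ) : ℝ :=
  (μ {ω | t < T ω}).toReal

/-- `T` has the decreasing failure rate (DFR) property:
`F̄_T(s+z)·F̄_T(t) ≤ F̄_T(t+z)·F̄_T(s)` for all `0 ≤ s ≤ t` and `z ≥ 0`
(log-convexity of the survival function on `[0,∞)`). -/
def IsDFR (μ : Measure Ω) (T : Ω → ℝ) : Prop :=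
  ∀ s t z : ℝ, 0 ≤ s → s ≤ t → 0 ≤ z →
    μ {ω | s + z < T ω} * μ {ω | t < T ω} ≤ μ {ω | t + z < T ω} * μ {ω | s < T ω}

/-- Arrival times: `S n = X 1 + ⋯ + X n` (with 0-based indexing of the
interarrival times, `X i` is the `(i+1)`-st interarrival time), `S 0 = 0`. -/
noncomputable def arr (X : ℕ → Ω → ℝ) (n : ℕ) (ω : Ω) : ℝ :=
  ∑ i ∈ Finset.range n, X i ω

/-- The counting process `N(t) = sup {n ≥ 0 : S n ≤ t}` (valued in `ℕ∞`,
allowing infinitely many arrivals). -/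
noncomputable def countN (X : ℕ → Ω → ℝ) (t : ℝ) (ω : Ω) : ℕ∞ :=
  sSup ((fun n : ℕ => (n : ℕ∞)) '' {n : ℕ | arr X n ω ≤ t})

/-- A (possibly defective) `ℕ∞`-valued random variable `M` is discrete DFR:
`P(M ≥ n+1)² ≤ P(M ≥ n)·P(M ≥ n+2)` for all `n`. -/
def IsdDFR (μ : Measure Ω) (M : Ω → ℕ∞) : Prop :=
  ∀ n : ℕ,
    μ {ω | (n : ℕ∞) + 1 ≤ M ω} ^ 2 ≤
      μ {ω | (n : ℕ∞) ≤ M ω} * μ {ω | (n : ℕ∞) + 2 ≤ M ω}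

/-! For `t ≥ 0` one has `N(t) ≥ m ↔ S_m ≤ t`, so by independence
`P(N(T) ≥ m) = E[P(T ≥ s)|_{s = S_m}]`. A log-convex survival function cannot jump at a
positive point, so `T` has no atoms in `(0, ∞)`; condition (b) rules out a common atom at `0`.
Hence `P(N(T) ≥ m) = E[F̄_T(S_m)]` for `m ≥ 1`, while `P(N(T) ≥ 0) = 1`, and the assumed
inequalities are exactly the d-DFR inequalities of `N(T)`. -/

section DFRFunction

variable {F : ℝ → ℝ}

lemma pow_mul_le_pow_mul_of_forall_mul_le {a β c e : ℝ} (ha : 0 ≤ a) (hβ : 0 ≤ β) (he : 0 ≤ e)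
    (hstep : ∀ s, 0 ≤ s → s ≤ c → a * F (s + e) ≤ β * F s) :
    ∀ j : ℕ, (j : ℝ) * e ≤ c + e → a ^ j * F (j * e) ≤ β ^ j * F 0
  | 0, _ => by simp
  | j + 1, hj => by
    have hjc : (j : ℝ) * e ≤ c := by push_cast at hj; linarith
    have ih := pow_mul_le_pow_mul_of_forall_mul_le ha hβ he hstep j (by linarith)
    calc a ^ (j + 1) * F ((j + 1 : ℕ) * e) = a ^ j * (a * F (j * e + e)) := by push_cast; ring_nf
      _ ≤ a ^ j * (β * F (j * e)) :=
        mul_le_mul_of_nonneg_left (hstep _ (by positivity) hjc) (by positivity)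
      _ = β * (a ^ j * F (j * e)) := by ring
      _ ≤ β * (β ^ j * F 0) := mul_le_mul_of_nonneg_left ih hβ
      _ = β ^ (j + 1) * F 0 := by ring

variable {L b : ℝ}

lemma mul_apply_add_le_of_dfr
    (hF : ∀ s t z, 0 ≤ s → s ≤ t → 0 ≤ z → F (s + z) * F t ≤ F (t + z) * F s)
    (hanti : Antitone F) (hnonneg : ∀ x, 0 ≤ F x) (hL : ∀ δ > 0, L ≤ F (b - δ))
    {s e : ℝ} (hs : 0 ≤ s) (he : 0 < e) (hse : s + e / 2 ≤ b) :
    L * F (s + e) ≤ F b * F s := by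
  have h := hF s (s + e) (b - e / 2 - s) hs (by linarith) (by linarith)
  rw [show s + (b - e / 2 - s) = b - e / 2 by ring,
    show s + e + (b - e / 2 - s) = b + e / 2 by ring] at h
  calc L * F (s + e) ≤ F (b - e / 2) * F (s + e) :=
        mul_le_mul_of_nonneg_right (hL _ (by positivity)) (hnonneg _)
    _ ≤ F (b + e / 2) * F s := h
    _ ≤ F b * F s := mul_le_mul_of_nonneg_right (hanti (by linarith)) (hnonneg _)

/-- If `F` jumped at `b`, i.e. `F b < L ≤ F (b - 0)`, the DFR inequality would give
`L * F (s + e) ≤ F b * F s` for all small steps `e` below `b`, so `F` would decay geometrically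
on `[0, b / 2]` while staying `≥ L` there. -/
lemma le_of_dfr_of_forall_le_sub
    (hF : ∀ s t z, 0 ≤ s → s ≤ t → 0 ≤ z → F (s + z) * F t ≤ F (t + z) * F s)
    (hanti : Antitone F) (hnonneg : ∀ x, 0 ≤ F x) (hL : ∀ δ > 0, L ≤ F (b - δ)) (hb : 0 < b) :
    L ≤ F b := by
  by_contra! hlt
  have hL0 : 0 < L := (hnonneg b).trans_lt hlt
  have hLhalf : L ≤ F (b / 2) := by simpa [sub_half] using hL (b / 2) (by positivity)
  have hLF0 : L ≤ F 0 := hLhalf.trans (hanti (by linarith))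
  have hpow : ∀ k : ℕ, 0 < k → L ^ k * L ≤ F b ^ k * F 0 := by
    intro k hk
    have hk' : (0 : ℝ) < k := by exact_mod_cast hk
    set e := b / (2 * k)
    have hke : (k : ℝ) * e = b / 2 := by simp only [e]; field_simp
    have he : 0 < e := by positivity
    calc L ^ k * L ≤ L ^ k * F (k * e) := by
          rw [hke]; exact mul_le_mul_of_nonneg_left hLhalf (by positivity)
      _ ≤ F b ^ k * F 0 :=
        pow_mul_le_pow_mul_of_forall_mul_le (c := b / 2 - e) hL0.le (hnonneg b) he.le
          (fun s hs hsc => mul_apply_add_le_of_dfr hF hanti hnonneg hL hs he (by linarith))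
          k (by linarith)
  set r := F b / L
  have hr0 : 0 ≤ r := div_nonneg (hnonneg b) hL0.le
  have hr1 : r < 1 := (div_lt_one hL0).2 hlt
  obtain ⟨k, hk⟩ := exists_pow_lt_of_lt_one (div_pos hL0 (hL0.trans_le hLF0)) hr1
  have hrk : r ^ (k + 1) * F 0 < L :=
    (lt_div_iff₀ (hL0.trans_le hLF0)).1 ((pow_le_pow_of_le_one hr0 hr1.le k.le_succ).trans_lt hk)
  have hFb : F b = r * L := (div_mul_cancel₀ _ hL0.ne').symm
  have := hpow (k + 1) k.succ_pos
  rw [hFb, mul_pow] at this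
  nlinarith [pow_pos hL0 (k + 1)]

end DFRFunction

section Survival

variable {μ : Measure Ω} {T : Ω → ℝ}

lemma surv_nonneg (t : ℝ) : 0 ≤ surv μ T t := ENNReal.toReal_nonneg

lemma antitone_surv [IsFiniteMeasure μ] : Antitone (surv μ T) := fun _ _ hst =>
  ENNReal.toReal_mono (measure_ne_top _ _) (measure_mono fun _ h => hst.trans_lt h)

lemma IsDFR.surv_mul_le [IsFiniteMeasure μ] (h : IsDFR μ T) (s t z : ℝ) (hs : 0 ≤ s)
    (hst : s ≤ t) (hz : 0 ≤ z) :
    surv μ T (s + z) * surv μ T t ≤ surv μ T (t + z) * surv μ T s := by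
  simpa only [surv, ← ENNReal.toReal_mul] using
    ENNReal.toReal_mono (by finiteness) (h s t z hs hst hz)

lemma IsDFR.measure_le_eq_measure_lt [IsFiniteMeasure μ] (h : IsDFR μ T) {b : ℝ} (hb : 0 < b) :
    μ {ω | b ≤ T ω} = μ {ω | b < T ω} := by
  refine le_antisymm ?_ (measure_mono fun ω (h : b < T ω) => h.le)
  rw [← ENNReal.toReal_le_toReal (measure_ne_top _ _) (measure_ne_top _ _)]
  refine le_of_dfr_of_forall_le_sub h.surv_mul_le antitone_surv surv_nonneg (fun δ hδ => ?_) hb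
  exact ENNReal.toReal_mono (measure_ne_top _ _)
    (measure_mono fun ω (h : b ≤ T ω) => show b - δ < T ω by linarith)

lemma measure_le_eq_measure_lt_of_measure_eq_zero {b : ℝ} (h : μ {ω | T ω = b} = 0) :
    μ {ω | b ≤ T ω} = μ {ω | b < T ω} := by
  refine le_antisymm ?_ (measure_mono fun ω (h : b < T ω) => h.le)
  calc μ {ω | b ≤ T ω} ≤ μ ({ω | b < T ω} ∪ {ω | T ω = b}) :=
        measure_mono fun ω (h : b ≤ T ω) => h.lt_or_eq.imp id Eq.symm
    _ ≤ μ {ω | b < T ω} + μ {ω | T ω = b} := measure_union_le _ _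
    _ = μ {ω | b < T ω} := by rw [h, add_zero]

lemma ofReal_integral_surv_comp [IsFiniteMeasure μ] {Y : Ω → ℝ} (hY : Measurable Y) :
    ENNReal.ofReal (∫ ω, surv μ T (Y ω) ∂μ) = ∫⁻ ω, μ {ω' | Y ω < T ω'} ∂μ := by
  have hmeas : Measurable fun ω => surv μ T (Y ω) := antitone_surv.measurable.comp hY
  rw [ofReal_integral_eq_lintegral_ofReal _ (ae_of_all _ fun _ => surv_nonneg _)]
  · exact lintegral_congr fun ω => ENNReal.ofReal_toReal (measure_ne_top _ _)
  refine Integrable.of_bound hmeas.aestronglyMeasurable (μ Set.univ).toReal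
    (ae_of_all _ fun ω => ?_)
  rw [Real.norm_of_nonneg (surv_nonneg _)]
  exact ENNReal.toReal_mono (measure_ne_top _ _) (measure_mono (Set.subset_univ _))

end Survival

lemma ProbabilityTheory.IndepFun.measure_mem_eq_lintegral {β γ : Type*} [MeasurableSpace β]
    [MeasurableSpace γ] {μ : Measure Ω} [IsFiniteMeasure μ] {Y : Ω → β} {Z : Ω → γ}
    (h : IndepFun Y Z μ) (hY : Measurable Y) (hZ : Measurable Z) {s : Set (β × γ)} (hs : MeasurableSet s) :
    μ {ω | (Y ω, Z ω) ∈ s} = ∫⁻ ω, μ {ω' | (Y ω, Z ω') ∈ s} ∂μ := by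
  change μ ((fun ω => (Y ω, Z ω)) ⁻¹' s) = _
  rw [← Measure.map_apply (hY.prodMk hZ) hs,
    h.map_prod_eq_prod_map_map hY.aemeasurable hZ.aemeasurable, Measure.prod_apply hs,
    lintegral_map (measurable_measure_prodMk_left hs) hY]
  exact lintegral_congr fun ω => Measure.map_apply hZ (measurable_prodMk_left hs)

section CountingProcess

variable {α : Type*} {X : ℕ → α → ℝ}

lemma arr_one (X : ℕ → α → ℝ) : arr X 1 = X 0 := by
  funext ω; simp [arr]

lemma arr_nonneg (hX : ∀ n ω, 0 ≤ X n ω) (n : ℕ) (ω : α) : 0 ≤ arr X n ω :=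
  Finset.sum_nonneg fun i _ => hX i ω

lemma monotone_arr (hX : ∀ n ω, 0 ≤ X n ω) (ω : α) : Monotone fun n => arr X n ω :=
  fun _ _ hmn => Finset.sum_le_sum_of_subset_of_nonneg (Finset.range_subset_range.mpr hmn)
    fun i _ _ => hX i ω

lemma arr_pos (hX : ∀ n ω, 0 ≤ X n ω) {n : ℕ} (hn : 1 ≤ n) {ω : α} (h : 0 < X 0 ω) :
    0 < arr X n ω :=
  h.trans_le ((congrFun (arr_one X) ω).symm.trans_le (monotone_arr hX ω hn))

lemma natCast_le_countN_iff (hX : ∀ n ω, 0 ≤ X n ω) {t : ℝ} (ht : 0 ≤ t) (n : ℕ) (ω : α) :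
    (n : ℕ∞) ≤ countN X t ω ↔ arr X n ω ≤ t := by
  refine ⟨fun h => ?_, fun h => le_sSup ⟨n, h, rfl⟩⟩
  cases n with
  | zero => simpa [arr] using ht
  | succ k =>
    rw [Nat.cast_succ, ENat.add_one_le_iff (ENat.natCast_ne_top k), countN, lt_sSup_iff] at h
    obtain ⟨_, ⟨m, hm, rfl⟩, hkm⟩ := h
    exact (monotone_arr hX ω (Nat.cast_lt.mp hkm)).trans hm

lemma measurable_arr {X : ℕ → Ω → ℝ} (hX : ∀ n, Measurable (X n)) (n : ℕ) :
    Measurable (arr X n) :=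
  Finset.measurable_sum _ fun i _ => hX i

end CountingProcess

section Main

variable {μ : Measure Ω} [IsFiniteMeasure μ] {X : ℕ → Ω → ℝ} {T : Ω → ℝ}

lemma ae_measure_arr_le_eq_measure_arr_lt (hX : ∀ n ω, 0 ≤ X n ω) (ha : IsDFR μ T)
    (hb : μ {ω | T ω = 0} * μ {ω | X 0 ω = 0} = 0) {m : ℕ} (hm : 1 ≤ m) :
    ∀ᵐ ω ∂μ, μ {ω' | arr X m ω ≤ T ω'} = μ {ω' | arr X m ω < T ω'} := by
  rcases mul_eq_zero.mp hb with hT0 | hX0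
  · refine ae_of_all _ fun ω => ?_
    rcases (arr_nonneg hX m ω).eq_or_lt with h | h
    · rw [← h]; exact measure_le_eq_measure_lt_of_measure_eq_zero hT0
    · exact ha.measure_le_eq_measure_lt h
  · filter_upwards [measure_eq_zero_iff_ae_notMem.1 hX0] with ω hω
    exact ha.measure_le_eq_measure_lt (arr_pos hX hm ((hX 0 ω).lt_of_ne' hω))

lemma measure_natCast_le_countN (hXmeas : ∀ n, Measurable (X n)) (hXnonneg : ∀ n ω, 0 ≤ X n ω)
    (hTmeas : Measurable T) (hTnonneg : ∀ ω, 0 ≤ T ω)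
    (hindep : IndepFun T (fun ω n => X n ω) μ) (ha : IsDFR μ T)
    (hb : μ {ω | T ω = 0} * μ {ω | X 0 ω = 0} = 0) {m : ℕ} (hm : 1 ≤ m) :
    μ {ω | (m : ℕ∞) ≤ countN X (T ω) ω} = ENNReal.ofReal (∫ ω, surv μ T (arr X m ω) ∂μ) := by
  have hS := measurable_arr hXmeas m
  have hindep' : IndepFun (arr X m) T μ :=
    (hindep.comp measurable_id
      (Finset.measurable_sum (Finset.range m) fun i _ => measurable_pi_apply i)).symm
  calc μ {ω | (m : ℕ∞) ≤ countN X (T ω) ω}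
      = μ {ω | (arr X m ω, T ω) ∈ {p : ℝ × ℝ | p.1 ≤ p.2}} := by
        simp only [natCast_le_countN_iff hXnonneg (hTnonneg _)]; rfl
    _ = ∫⁻ ω, μ {ω' | arr X m ω ≤ T ω'} ∂μ :=
        hindep'.measure_mem_eq_lintegral hS hTmeas (measurableSet_le measurable_fst measurable_snd)
    _ = ∫⁻ ω, μ {ω' | arr X m ω < T ω'} ∂μ :=
        lintegral_congr_ae (ae_measure_arr_le_eq_measure_arr_lt hXnonneg ha hb hm)
    _ = ENNReal.ofReal (∫ ω, surv μ T (arr X m ω) ∂μ) := (ofReal_integral_surv_comp hS).symm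

end Main

theorem stmt0_general
    (μ : Measure Ω) [IsProbabilityMeasure μ]
    (X : ℕ → Ω → ℝ) (T : Ω → ℝ)
    (hXmeas : ∀ n, Measurable (X n)) (hXnonneg : ∀ n ω, 0 ≤ X n ω)
    (hTmeas : Measurable T) (hTnonneg : ∀ ω, 0 ≤ T ω)
    (hindep : IndepFun T (fun ω n => X n ω) μ)
    (ha : IsDFR μ T)
    (hb : μ {ω | T ω = 0} * μ {ω | X 0 ω = 0} = 0)
    (h0 : (∫ ω, surv μ T (X 0 ω) ∂μ) ^ 2 ≤ ∫ ω, surv μ T (arr X 2 ω) ∂μ)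
    (hn : ∀ n : ℕ, 1 ≤ n →
      (∫ ω, surv μ T (arr X (n + 1) ω) ∂μ) ^ 2 ≤
        (∫ ω, surv μ T (arr X n ω) ∂μ) * (∫ ω, surv μ T (arr X (n + 2) ω) ∂μ)) :
    IsdDFR μ (fun ω => countN X (T ω) ω) := by
  have hP : ∀ m : ℕ, 1 ≤ m → μ {ω | (m : ℕ∞) ≤ countN X (T ω) ω} =
      ENNReal.ofReal (∫ ω, surv μ T (arr X m ω) ∂μ) :=
    fun m hm => measure_natCast_le_countN hXmeas hXnonneg hTmeas hTnonneg hindep ha hb hm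
  have hI : ∀ m, 0 ≤ ∫ ω, surv μ T (arr X m ω) ∂μ :=
    fun m => integral_nonneg fun ω => surv_nonneg _
  intro n
  dsimp only
  rw [show (n : ℕ∞) + 1 = ((n + 1 : ℕ) : ℕ∞) by norm_cast,
    show (n : ℕ∞) + 2 = ((n + 2 : ℕ) : ℕ∞) by norm_cast]
  rcases n with _ | n
  · simp only [CharP.cast_eq_zero, zero_le, Set.ofPred_true, measure_univ, one_mul, zero_add]
    rw [hP 1 le_rfl, hP 2 one_le_two, ← ENNReal.ofReal_pow (hI 1), arr_one]
    exact ENNReal.ofReal_le_ofReal h0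
  · rw [hP _ n.succ_pos, hP _ (by omega), hP _ (by omega), ← ENNReal.ofReal_pow (hI _),
      ← ENNReal.ofReal_mul (hI _)]
    exact ENNReal.ofReal_le_ofReal (hn _ n.succ_pos)

/-- Lemma: sufficient conditions for `N(T)` to be d-DFR.
Let `N` be a general counting process with interarrival times `X 0, X 1, …`
(mathematically `X_1, X_2, …`) and arrival times `S n = arr X n`, and let `T`
be a nonnegative random time independent of the process. Assume `T` is DFR and
`P(T = 0)·P(X_1 = 0) = 0`. If `E[F̄_T(X_1)]² ≤ E[F̄_T(S_2)]` and
`E[F̄_T(S_{n+1})]² ≤ E[F̄_T(S_n)]·E[F̄_T(S_{n+2})]` for all `n ≥ 1`,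
then `N(T)` is d-DFR. -/
theorem stmt0
    (μ : Measure Ω) [IsProbabilityMeasure μ]
    (X : ℕ → Ω → ℝ) (T : Ω → ℝ)
    (hXmeas : ∀ n, Measurable (X n)) (hXnonneg : ∀ n ω, 0 ≤ X n ω)
    (hXnondeg : ∀ n, μ {ω | X n ω = 0} < 1)
    (hTmeas : Measurable T) (hTnonneg : ∀ ω, 0 ≤ T ω)
    (hindep : IndepFun T (fun ω n => X n ω) μ)
    (ha : IsDFR μ T)
    (hb : μ {ω | T ω = 0} * μ {ω | X 0 ω = 0} = 0)
    (h0 : (∫ ω, surv μ T (X 0 ω) ∂μ) ^ 2 ≤ ∫ ω, surv μ T (arr X 2 ω) ∂μ)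
    (hn : ∀ n : ℕ, 1 ≤ n →
      (∫ ω, surv μ T (arr X (n + 1) ω) ∂μ) ^ 2 ≤
        (∫ ω, surv μ T (arr X n ω) ∂μ) * (∫ ω, surv μ T (arr X (n + 2) ω) ∂μ)) :
    IsdDFR μ (fun ω => countN X (T ω) ω) :=
  stmt0_general μ X T hXmeas hXnonneg hTmeas hTnonneg hindep ha hb h0 hn
end

section
/- Let X_1, X_2 be nonnegative random variables and let T be a nonnegative random variable independent of (X_1, X_2) with survival function F̄_T. Assume T is DFR, the vector (X_1, X_2) is associated, and X_2 ≤_ST X_1. Then E[F̄_T(X_1)]² ≤ E[F̄_T(X_1 + X_2)]·F̄_T(0). -/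
/-!
`F̄_T` is antitone, so `X₂ ≤_ST X₁` gives `E F̄_T(X₁) ≤ E F̄_T(X₂)`, and association of `(X₁, X₂)`,
applied to the antitone functions `F̄_T(x₁)` and `F̄_T(x₂)`, gives
`E F̄_T(X₁) · E F̄_T(X₂) ≤ E[F̄_T(X₁) F̄_T(X₂)]`. The DFR inequality with `s = 0` bounds the
integrand pointwise by `F̄_T(X₁ + X₂) F̄_T(0)`.
-/

open MeasureTheory ProbabilityTheory

variable {Ω : Type*} [MeasurableSpace Ω]

/-- The random vector `(Z, W)` is associated: `Cov(f(Z,W), g(Z,W)) ≥ 0` for all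
componentwise increasing `f g : ℝ² → ℝ` for which the covariance exists. -/
def Associated2 {Ω' : Type*} [MeasurableSpace Ω'] (μ : Measure Ω') (Z W : Ω' → ℝ) : Prop :=
  ∀ f g : ℝ × ℝ → ℝ, Monotone f → Monotone g →
    Integrable (fun ω => f (Z ω, W ω)) μ → Integrable (fun ω => g (Z ω, W ω)) μ →
    Integrable (fun ω => f (Z ω, W ω) * g (Z ω, W ω)) μ →
    (∫ ω, f (Z ω, W ω) ∂μ) * (∫ ω, g (Z ω, W ω) ∂μ) ≤
      ∫ ω, f (Z ω, W ω) * g (Z ω, W ω) ∂μ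

/-- Usual stochastic order: `X ≤_ST Y` iff `P(X > t) ≤ P(Y > t)` for all `t`. -/
def StochLE {Ω' : Type*} [MeasurableSpace Ω'] (μ : Measure Ω') (X Y : Ω' → ℝ) : Prop :=
  ∀ t : ℝ, μ {ω | t < X ω} ≤ μ {ω | t < Y ω}

section Survival

variable {μ : Measure Ω} {T : Ω → ℝ}

lemma norm_surv_le_one [IsProbabilityMeasure μ] (t : ℝ) : ‖surv μ T t‖ ≤ 1 := by
  rw [Real.norm_of_nonneg (surv_nonneg t)]
  exact ENNReal.toReal_le_of_le_ofReal zero_le_one (by simpa using prob_le_one)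

variable [IsFiniteMeasure μ]

lemma surv_antitone : Antitone (surv μ T) := fun _ _ hst =>
  ENNReal.toReal_mono (measure_ne_top μ _) (measure_mono fun _ h => hst.trans_lt h)

lemma IsDFR.surv_mul_surv_le (hT : IsDFR μ T) {s t z : ℝ} (hs : 0 ≤ s) (hst : s ≤ t)
    (hz : 0 ≤ z) : surv μ T (s + z) * surv μ T t ≤ surv μ T (t + z) * surv μ T s := by
  simpa only [surv, ← ENNReal.toReal_mul] using
    ENNReal.toReal_mono (ENNReal.mul_ne_top (measure_ne_top μ _) (measure_ne_top μ _))
      (hT s t z hs hst hz)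

lemma IsDFR.surv_mul_surv_le_surv_add (hT : IsDFR μ T) {t z : ℝ} (ht : 0 ≤ t) (hz : 0 ≤ z) :
    surv μ T t * surv μ T z ≤ surv μ T (t + z) * surv μ T 0 := by
  simpa only [zero_add, mul_comm (surv μ T z)] using hT.surv_mul_surv_le le_rfl ht hz

end Survival

lemma integrable_surv_comp {μ : Measure Ω} [IsProbabilityMeasure μ] (T : Ω → ℝ) {Ω' : Type*}
    [MeasurableSpace Ω'] {ν : Measure Ω'} [IsFiniteMeasure ν] {X : Ω' → ℝ} (hX : Measurable X) :
    Integrable (fun ω => surv μ T (X ω)) ν :=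
  .of_bound (surv_antitone.measurable.comp hX).aestronglyMeasurable 1
    (ae_of_all _ fun _ => norm_surv_le_one _)

section StochasticOrder

variable {Ω' : Type*} [MeasurableSpace Ω'] {μ : Measure Ω'} {X Y : Ω' → ℝ}

/-- Fubini turns `E[F̄_T(X)]` into the probability that an independent copy of `T` exceeds `X`. -/
lemma integral_surv_comp_eq_prod (ν : Measure Ω) [IsFiniteMeasure ν] {T : Ω → ℝ}
    (hT : Measurable T) (hX : Measurable X) :
    ∫ ω, surv ν T (X ω) ∂μ = ((μ.prod ν) {p | X p.1 < T p.2}).toReal := by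
  have hS : MeasurableSet {p : Ω' × Ω | X p.1 < T p.2} :=
    measurableSet_lt (hX.comp measurable_fst) (hT.comp measurable_snd)
  rw [Measure.prod_apply hS, ← integral_toReal (measurable_measure_prodMk_left hS).aemeasurable
    (ae_of_all _ fun _ => measure_lt_top ν _)]
  rfl

variable [IsFiniteMeasure μ]

lemma StochLE.measure_le_le (h : StochLE μ X Y) (hX : Measurable X) (hY : Measurable Y)
    (s : ℝ) : μ {ω | Y ω ≤ s} ≤ μ {ω | X ω ≤ s} := by
  have hcompl : ∀ Z : Ω' → ℝ, Measurable Z → μ {ω | Z ω ≤ s} = μ Set.univ - μ {ω | s < Z ω} :=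
    fun Z hZ => by
      rw [← measure_compl (measurableSet_lt measurable_const hZ) (measure_ne_top μ _)]
      simp only [Set.compl_ofPred, not_lt]
  rw [hcompl X hX, hcompl Y hY]
  exact tsub_le_tsub_left (h s) _

lemma StochLE.measure_lt_le (h : StochLE μ X Y) (hX : Measurable X) (hY : Measurable Y)
    (t : ℝ) : μ {ω | Y ω < t} ≤ μ {ω | X ω < t} := by
  set s : ℕ → ℝ := fun n => t - 1 / (n + 1)
  have hs : Monotone s := fun m n hmn => sub_le_sub_left (Nat.one_div_le_one_div hmn) t
  have hunion : ∀ Z : Ω' → ℝ, {ω | Z ω < t} = ⋃ n, {ω | Z ω ≤ s n} := fun Z => by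
    ext ω
    simp only [Set.mem_ofPred_eq, Set.mem_iUnion, s]
    constructor
    · intro hlt
      obtain ⟨n, hn⟩ := exists_nat_one_div_lt (sub_pos.2 hlt)
      exact ⟨n, by linarith⟩
    · rintro ⟨n, hn⟩
      linarith [Nat.one_div_pos_of_nat (α := ℝ) (n := n)]
  have hmono : ∀ Z : Ω' → ℝ, Monotone fun n => {ω | Z ω ≤ s n} :=
    fun Z m n hmn ω hω => le_trans hω (hs hmn)
  rw [hunion X, hunion Y, (hmono X).measure_iUnion, (hmono Y).measure_iUnion]
  exact iSup_mono fun n => h.measure_le_le hX hY (s n)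

lemma StochLE.integral_surv_le (h : StochLE μ X Y) (hX : Measurable X) (hY : Measurable Y)
    (ν : Measure Ω) [IsFiniteMeasure ν] {T : Ω → ℝ} (hT : Measurable T) :
    ∫ ω, surv ν T (Y ω) ∂μ ≤ ∫ ω, surv ν T (X ω) ∂μ := by
  have hS : ∀ Z : Ω' → ℝ, Measurable Z → MeasurableSet {p : Ω' × Ω | Z p.1 < T p.2} :=
    fun Z hZ => measurableSet_lt (hZ.comp measurable_fst) (hT.comp measurable_snd)
  rw [integral_surv_comp_eq_prod ν hT hY, integral_surv_comp_eq_prod ν hT hX]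
  refine ENNReal.toReal_mono (measure_ne_top _ _) ?_
  rw [Measure.prod_apply_symm (hS Y hY), Measure.prod_apply_symm (hS X hX)]
  exact lintegral_mono fun ω => h.measure_lt_le hX hY (T ω)

end StochasticOrder

lemma Associated2.integral_mul_integral_le_of_antitone {Ω' : Type*} [MeasurableSpace Ω']
    {μ : Measure Ω'} {Z W : Ω' → ℝ} (h : Associated2 μ Z W) {f g : ℝ × ℝ → ℝ}
    (hf : Antitone f) (hg : Antitone g) (hfi : Integrable (fun ω => f (Z ω, W ω)) μ)
    (hgi : Integrable (fun ω => g (Z ω, W ω)) μ)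
    (hfgi : Integrable (fun ω => f (Z ω, W ω) * g (Z ω, W ω)) μ) :
    (∫ ω, f (Z ω, W ω) ∂μ) * (∫ ω, g (Z ω, W ω) ∂μ) ≤
      ∫ ω, f (Z ω, W ω) * g (Z ω, W ω) ∂μ := by
  simpa only [Pi.neg_apply, integral_neg, neg_mul_neg] using
    h (-f) (-g) hf.neg hg.neg hfi.neg hgi.neg (by simpa only [Pi.neg_apply, neg_mul_neg])

theorem stmt1_general
    (μ : Measure Ω) [IsProbabilityMeasure μ]
    (X₁ X₂ T : Ω → ℝ)
    (hX₁meas : Measurable X₁) (hX₂meas : Measurable X₂) (hTmeas : Measurable T)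
    (hX₁nonneg : ∀ ω, 0 ≤ X₁ ω) (hX₂nonneg : ∀ ω, 0 ≤ X₂ ω)
    (hDFR : IsDFR μ T)
    (hassoc : Associated2 μ X₁ X₂)
    (hst : StochLE μ X₂ X₁) :
    (∫ ω, surv μ T (X₁ ω) ∂μ) ^ 2 ≤ (∫ ω, surv μ T (X₁ ω + X₂ ω) ∂μ) * surv μ T 0 := by
  have hint : ∀ {X : Ω → ℝ}, Measurable X → Integrable (fun ω => surv μ T (X ω)) μ :=
    integrable_surv_comp T
  have hprod : Integrable (fun ω => surv μ T (X₁ ω) * surv μ T (X₂ ω)) μ :=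
    (hint hX₂meas).bdd_mul (surv_antitone.measurable.comp hX₁meas).aestronglyMeasurable
      (ae_of_all _ fun _ => norm_surv_le_one _)
  calc (∫ ω, surv μ T (X₁ ω) ∂μ) ^ 2
      = (∫ ω, surv μ T (X₁ ω) ∂μ) * ∫ ω, surv μ T (X₁ ω) ∂μ := sq _
    _ ≤ (∫ ω, surv μ T (X₁ ω) ∂μ) * ∫ ω, surv μ T (X₂ ω) ∂μ :=
        mul_le_mul_of_nonneg_left (hst.integral_surv_le hX₂meas hX₁meas μ hTmeas)
          (integral_nonneg fun _ => surv_nonneg _)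
    _ ≤ ∫ ω, surv μ T (X₁ ω) * surv μ T (X₂ ω) ∂μ :=
        hassoc.integral_mul_integral_le_of_antitone (f := fun p => surv μ T p.1)
          (g := fun p => surv μ T p.2) (fun _ _ h => surv_antitone h.1)
          (fun _ _ h => surv_antitone h.2) (hint hX₁meas) (hint hX₂meas) hprod
    _ ≤ ∫ ω, surv μ T (X₁ ω + X₂ ω) * surv μ T 0 ∂μ :=
        integral_mono hprod ((hint (hX₁meas.add hX₂meas)).mul_const _)
          fun ω => hDFR.surv_mul_surv_le_surv_add (hX₁nonneg ω) (hX₂nonneg ω)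
    _ = (∫ ω, surv μ T (X₁ ω + X₂ ω) ∂μ) * surv μ T 0 := integral_mul_const _ _

/-- If `T` is DFR and independent of `(X₁, X₂)`, `(X₁, X₂)` is
associated and `X₂ ≤_ST X₁`, then `E[F̄_T(X₁)]² ≤ E[F̄_T(X₁+X₂)]·F̄_T(0)`. -/
theorem stmt1
    (μ : Measure Ω) [IsProbabilityMeasure μ]
    (X₁ X₂ T : Ω → ℝ)
    (hX₁meas : Measurable X₁) (hX₂meas : Measurable X₂) (hTmeas : Measurable T)
    (hX₁nonneg : ∀ ω, 0 ≤ X₁ ω) (hX₂nonneg : ∀ ω, 0 ≤ X₂ ω) (hTnonneg : ∀ ω, 0 ≤ T ω)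
    (hindep : IndepFun T (fun ω => (X₁ ω, X₂ ω)) μ)
    (hDFR : IsDFR μ T)
    (hassoc : Associated2 μ X₁ X₂)
    (hst : StochLE μ X₂ X₁) :
    (∫ ω, surv μ T (X₁ ω) ∂μ) ^ 2 ≤ (∫ ω, surv μ T (X₁ ω + X₂ ω) ∂μ) * surv μ T 0 :=
  stmt1_general μ X₁ X₂ T hX₁meas hX₂meas hTmeas hX₁nonneg hX₂nonneg hDFR hassoc hst
end

section
/- Let H̄ : [0,∞) → [0,1] be a DFR survival function with H̄(0) = 1, and let (Z, W) be a nonnegative random vector such that (Z, W) is associated and W ≤_ST Z. Then E[H̄(Z)]² ≤ E[H̄(Z + W)]. -/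
/-!
Since `G 0 = 1`, the DFR inequality with `s = 0` makes `G` supermultiplicative on `[0, ∞)`:
`G z * G w ≤ G (z + w)`. Extend `G` to the antitone function `x ↦ G (max x 0)` on `ℝ`.
Association of `(Z, W)` applied to the increasing functions `-G Z`, `-G W` gives
`E[G Z] E[G W] ≤ E[G Z * G W]`, and `W ≤_ST Z` gives `E[G Z] ≤ E[G W]` by the layer-cake
formula, since the superlevel sets of an antitone function are lower sets of `ℝ`, i.e. empty,
everything, or a left ray, whose probabilities are controlled by the (open or closed) tails.
Hence `E[G Z]² ≤ E[G Z] E[G W] ≤ E[G Z * G W] ≤ E[G (Z + W)]`.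
-/

open MeasureTheory ProbabilityTheory

variable {Ω : Type*} [MeasurableSpace Ω]

/-- An abstract survival function `G : ℝ → ℝ` (restricted to `[0,∞)`) has the
DFR property: `G(s+z)·G(t) ≤ G(t+z)·G(s)` for all `0 ≤ s ≤ t`, `z ≥ 0`. -/
def DFRfun (G : ℝ → ℝ) : Prop :=
  ∀ s t z : ℝ, 0 ≤ s → s ≤ t → 0 ≤ z → G (s + z) * G t ≤ G (t + z) * G s

/-- `G` is a survival function on `[0,∞)`: measurable, decreasing,
with values in `[0,1]`. -/
def IsSurvFun (G : ℝ → ℝ) : Prop :=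
  Measurable G ∧ (∀ s t : ℝ, 0 ≤ s → s ≤ t → G t ≤ G s) ∧
    ∀ t : ℝ, 0 ≤ t → 0 ≤ G t ∧ G t ≤ 1

open Set Filter Topology

theorem IsUpperSet.eq_empty_or_univ_or_Ioi_or_Ici {α : Type*} [ConditionallyCompleteLinearOrder α]
    {s : Set α} (hs : IsUpperSet s) :
    s = ∅ ∨ s = univ ∨ ∃ c, s = Ioi c ∨ s = Ici c := by
  rcases s.eq_empty_or_nonempty with rfl | hne
  · exact Or.inl rfl
  by_cases hbdd : BddBelow s
  · refine Or.inr (Or.inr ⟨sInf s, ?_⟩)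
    have hIoi : Ioi (sInf s) ⊆ s := fun x hx => by
      obtain ⟨u, hu, hux⟩ := exists_lt_of_csInf_lt hne hx
      exact hs hux.le hu
    have hIci : s ⊆ Ici (sInf s) := fun x hx => csInf_le hbdd hx
    by_cases hmem : sInf s ∈ s
    · exact Or.inr (hIci.antisymm fun x hx => hs hx hmem)
    · refine Or.inl (Subset.antisymm (fun x hx => ?_) hIoi)
      exact (hIci hx).lt_of_ne fun h => hmem (h ▸ hx)
  · refine Or.inr (Or.inl (eq_univ_of_forall fun x => ?_))
    obtain ⟨u, hu, hux⟩ := not_bddBelow_iff.1 hbdd x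
    exact hs hux.le hu

section

variable {μ : Measure Ω} {X Y : Ω → ℝ}

namespace StochLE

theorem measure_Ici_le [IsFiniteMeasure μ] (h : StochLE μ X Y) (hY : Measurable Y) (c : ℝ) :
    μ {ω | c ≤ X ω} ≤ μ {ω | c ≤ Y ω} := by
  have hinter : ∀ V : Ω → ℝ, {ω | c ≤ V ω} = ⋂ ε > (0 : ℝ), {ω | c - ε < V ω} := by
    intro V
    ext ω
    simp only [mem_ofPred_eq, mem_iInter]
    refine ⟨fun hc ε hε => by linarith, fun hV => le_of_forall_pos_lt_add fun ε hε => ?_⟩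
    linarith [hV ε hε]
  have hY_lim : Tendsto (fun ε => μ {ω | c - ε < Y ω}) (𝓝[>] 0) (𝓝 (μ {ω | c ≤ Y ω})) := by
    rw [hinter Y]
    refine tendsto_measure_biInter_gt
      (fun ε _ => (measurableSet_lt measurable_const hY).nullMeasurableSet)
      (fun ε δ _ hεδ ω hω => ?_) ⟨1, one_pos, measure_ne_top μ _⟩
    simp only [mem_ofPred_eq] at hω ⊢
    linarith
  refine ge_of_tendsto hY_lim (eventually_mem_nhdsWithin.mono fun ε hε => ?_)
  calc μ {ω | c ≤ X ω} ≤ μ {ω | c - ε < X ω} :=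
        measure_mono fun ω hω => by simp only [mem_ofPred_eq] at hω ⊢; linarith [mem_Ioi.1 hε]
    _ ≤ μ {ω | c - ε < Y ω} := h _

theorem measure_preimage_le_of_isUpperSet [IsFiniteMeasure μ] (h : StochLE μ X Y)
    (hY : Measurable Y) {U : Set ℝ} (hU : IsUpperSet U) : μ (X ⁻¹' U) ≤ μ (Y ⁻¹' U) := by
  rcases hU.eq_empty_or_univ_or_Ioi_or_Ici with rfl | rfl | ⟨c, rfl | rfl⟩
  · simp
  · simp
  · exact h c
  · exact h.measure_Ici_le hY c

theorem measure_preimage_le_of_isLowerSet [IsFiniteMeasure μ] (h : StochLE μ X Y)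
    (hX : Measurable X) (hY : Measurable Y) {L : Set ℝ} (hL : IsLowerSet L) :
    μ (Y ⁻¹' L) ≤ μ (X ⁻¹' L) := by
  have hLc : MeasurableSet Lᶜ := hL.compl.ordConnected.measurableSet
  have hpre : ∀ V : Ω → ℝ, V ⁻¹' L = (V ⁻¹' Lᶜ)ᶜ := fun V => by rw [preimage_compl, compl_compl]
  rw [hpre X, hpre Y, measure_compl (hY hLc) (measure_ne_top μ _),
    measure_compl (hX hLc) (measure_ne_top μ _)]
  exact tsub_le_tsub_left (h.measure_preimage_le_of_isUpperSet hY hL.compl) _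

theorem integral_comp_le_of_antitone [IsFiniteMeasure μ] (h : StochLE μ X Y)
    (hX : Measurable X) (hY : Measurable Y) {φ : ℝ → ℝ} (hφ : Antitone φ) (hφ_nonneg : 0 ≤ φ)
    (hφX : Integrable (fun ω => φ (X ω)) μ) :
    ∫ ω, φ (Y ω) ∂μ ≤ ∫ ω, φ (X ω) ∂μ := by
  have hmeas : ∀ V : Ω → ℝ, Measurable V → Measurable fun ω => φ (V ω) :=
    fun V hV => hφ.measurable.comp hV
  have hnn : ∀ V : Ω → ℝ, 0 ≤ᵐ[μ] fun ω => φ (V ω) := fun V => ae_of_all _ fun ω => hφ_nonneg _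
  rw [integral_eq_lintegral_of_nonneg_ae (hnn Y) (hmeas Y hY).aestronglyMeasurable,
    integral_eq_lintegral_of_nonneg_ae (hnn X) (hmeas X hX).aestronglyMeasurable]
  refine ENNReal.toReal_mono ((lintegral_ofReal_ne_top_iff_integrable
    (hmeas X hX).aestronglyMeasurable (hnn X)).2 hφX) ?_
  rw [lintegral_eq_lintegral_meas_lt μ (hnn Y) (hmeas Y hY).aemeasurable,
    lintegral_eq_lintegral_meas_lt μ (hnn X) (hmeas X hX).aemeasurable]
  refine setLIntegral_mono' measurableSet_Ioi fun t _ => ?_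
  exact h.measure_preimage_le_of_isLowerSet hX hY (L := {x | t < φ x})
    fun a _ hba (ha : t < φ a) => ha.trans_le (hφ hba)

end StochLE

theorem Associated2.integral_mul_integral_le_of_antitone_s2 (h : Associated2 μ X Y) {φ ψ : ℝ → ℝ}
    (hφ : Antitone φ) (hψ : Antitone ψ) (hφX : Integrable (fun ω => φ (X ω)) μ)
    (hψY : Integrable (fun ω => ψ (Y ω)) μ) (hφψ : Integrable (fun ω => φ (X ω) * ψ (Y ω)) μ) :
    (∫ ω, φ (X ω) ∂μ) * (∫ ω, ψ (Y ω) ∂μ) ≤ ∫ ω, φ (X ω) * ψ (Y ω) ∂μ := by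
  have key := h (fun p => -φ p.1) (fun p => -ψ p.2) (fun p q hpq => neg_le_neg (hφ hpq.1))
    (fun p q hpq => neg_le_neg (hψ hpq.2)) hφX.neg hψY.neg (by simpa only [neg_mul_neg] using hφψ)
  simpa only [integral_neg, neg_mul_neg] using key

theorem DFRfun.mul_le_apply_add {G : ℝ → ℝ} (hG : DFRfun G) (hG0 : G 0 = 1) {x y : ℝ}
    (hx : 0 ≤ x) (hy : 0 ≤ y) : G x * G y ≤ G (x + y) := by
  simpa only [zero_add, hG0, mul_one, add_comm y x] using hG 0 y x le_rfl hy hx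

theorem IsSurvFun.antitone_comp_max {G : ℝ → ℝ} (hG : IsSurvFun G) :
    Antitone fun x => G (max x 0) :=
  fun a _ hab => hG.2.1 _ _ (le_max_right a 0) (max_le_max_right 0 hab)

theorem IsSurvFun.comp_max_mem_Icc {G : ℝ → ℝ} (hG : IsSurvFun G) (x : ℝ) :
    G (max x 0) ∈ Icc 0 1 :=
  hG.2.2 _ (le_max_right x 0)

theorem integrable_comp_of_antitone_of_mem_Icc [IsFiniteMeasure μ] {φ : ℝ → ℝ} (hφ : Antitone φ)
    (hφ01 : ∀ x, φ x ∈ Icc 0 1) (hX : Measurable X) : Integrable (fun ω => φ (X ω)) μ :=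
  .of_bound (hφ.measurable.comp hX).aestronglyMeasurable 1 <| ae_of_all _ fun ω => by
    rw [Real.norm_of_nonneg (hφ01 _).1]
    exact (hφ01 _).2

end

/-- Let `G : [0,∞) → [0,1]` be a DFR survival function with
`G 0 = 1`, and let `(Z, W)` be a nonnegative random vector that is associated
and such that `W ≤_ST Z`. Then `E[G(Z)]² ≤ E[G(Z+W)]`. -/
theorem stmt2
    (μ : Measure Ω) [IsProbabilityMeasure μ]
    (G : ℝ → ℝ) (Z W : Ω → ℝ)
    (hGsurv : IsSurvFun G) (hG0 : G 0 = 1) (hGDFR : DFRfun G)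
    (hZmeas : Measurable Z) (hWmeas : Measurable W)
    (hZnonneg : ∀ ω, 0 ≤ Z ω) (hWnonneg : ∀ ω, 0 ≤ W ω)
    (hassoc : Associated2 μ Z W)
    (hst : StochLE μ W Z) :
    (∫ ω, G (Z ω) ∂μ) ^ 2 ≤ ∫ ω, G (Z ω + W ω) ∂μ := by
  set Φ : ℝ → ℝ := fun x => G (max x 0)
  have hΦ : Antitone Φ := hGsurv.antitone_comp_max
  have hΦ01 : ∀ x, Φ x ∈ Icc 0 1 := hGsurv.comp_max_mem_Icc
  have hΦ_eq : ∀ {x}, 0 ≤ x → Φ x = G x := fun hx => congrArg G (max_eq_left hx)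
  have hint : ∀ {V : Ω → ℝ}, Measurable V → Integrable (fun ω => Φ (V ω)) μ :=
    integrable_comp_of_antitone_of_mem_Icc hΦ hΦ01
  have hint_mul : Integrable (fun ω => Φ (Z ω) * Φ (W ω)) μ :=
    (hint hWmeas).bdd_mul (hint hZmeas).aestronglyMeasurable (c := 1) <| ae_of_all _ fun ω =>
      abs_le.2 ⟨by linarith [(hΦ01 (Z ω)).1], (hΦ01 _).2⟩
  calc (∫ ω, G (Z ω) ∂μ) ^ 2 = (∫ ω, Φ (Z ω) ∂μ) * ∫ ω, Φ (Z ω) ∂μ := by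
        simp only [hΦ_eq (hZnonneg _), sq]
    _ ≤ (∫ ω, Φ (Z ω) ∂μ) * ∫ ω, Φ (W ω) ∂μ :=
        mul_le_mul_of_nonneg_left
          (hst.integral_comp_le_of_antitone hWmeas hZmeas hΦ (fun x => (hΦ01 x).1) (hint hWmeas))
          (integral_nonneg fun ω => (hΦ01 _).1)
    _ ≤ ∫ ω, Φ (Z ω) * Φ (W ω) ∂μ :=
        hassoc.integral_mul_integral_le_of_antitone_s2 hΦ hΦ (hint hZmeas) (hint hWmeas) hint_mul
    _ ≤ ∫ ω, G (Z ω + W ω) ∂μ := by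
        refine integral_mono hint_mul ?_ fun ω => ?_
        · exact (hint (hZmeas.add hWmeas)).congr <|
            ae_of_all _ fun ω => hΦ_eq (add_nonneg (hZnonneg ω) (hWnonneg ω))
        · rw [hΦ_eq (hZnonneg ω), hΦ_eq (hWnonneg ω)]
          exact hGDFR.mul_le_apply_add hG0 (hZnonneg ω) (hWnonneg ω)
end
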